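/- The interpolated product ∗_r on a quasi-shuffle algebra, defined by u ∗_r v = Σ^{−r}(Σ^r u * Σ^r v), satisfies the recursion: 1 ∗_r w = w ∗_r 1 = w; a ∗_r b = ab + ba + (1−2r)(a⋄b) for letters a,b; and (av) ∗_r (bw) = a(v ∗_r bw) + b(av ∗_r w) + (1−2r)(a⋄b)(v ∗_r w) + (r²−r)(a⋄b)⋄(v ∗_r w) for letters a,b and words v,w with vw ≠ 1. -/

import Mathlib

/-!
Quasi-shuffle algebras (Hoffman–Ihara).  We model the span `kA` of the alphabet
(with its commutative associative product `⋄`, written `*` in `L`) as a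
non-unital commutative `k`-algebra `L`, and the word algebra `k⟨A⟩` as the
tensor algebra `TensorAlgebra k L`, in which a word `a₁⋯aₙ` is the product
`ι a₁ * ⋯ * ι aₙ`.
-/

open TensorAlgebra

variable (k : Type*) [Field k]
variable {L : Type*} [NonUnitalCommRing L] [Module k L]
  [SMulCommClass k L L] [IsScalarTower k L L]

/-- The word `a₁⋯aₙ` as an element of the tensor algebra. -/
def word (l : List L) : TensorAlgebra k L := (l.map fun a => TensorAlgebra.ι k a).prod

/-- The `⋄`-product of the letters of a nonempty block (junk value `0` on `[]`). -/
def blockProd : List L → L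
  | [] => 0
  | a :: t => t.foldl (· * ·) a

/-- The Hoffman–Ihara operator `Ψ_f` on words, for `f = c₁t + c₂t² + ⋯`:
`Ψ_f(w) = Σ_{(i₁,…,i_m) composition of ℓ(w)} c_{i₁}⋯c_{i_m} I[w]`,
written via the recursion on the first block. -/
def psi (c : ℕ → k) : List L → TensorAlgebra k L
  | [] => 1
  | a :: w => ∑ j ∈ Finset.range (w.length + 1),
      c (j + 1) • (TensorAlgebra.ι k (blockProd (a :: w.take j)) * psi c (w.drop j))
  termination_by l => l.length
  decreasing_by simp [List.length_drop] <;> omega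

/-!
`Σ^s` turns left multiplication by a letter `a` into the twisted operator
`T_a = a · + s (a ⋄ ·)` (split off the first block of `Ψ`), and `Σ^{-s}` turns `T_a` back into
left multiplication; in particular `Σ^{-s} ∘ Σ^s = id`, which gives the unit laws. For the
recursion, `(a v) ∗_r (b w) = Σ^{-r}(T_a X * T_b Y)` with `X = Σ^r v`, `Y = Σ^r w`, so it suffices to
expand `T_a X * T_b Y` in powers of `r`: the coefficient of `r⁰` is the quasi-shuffle recursion,
and those of `r¹`, `r²` are two identities between `*` and `⋄`, each checked on words by splitting
off first letters.
-/

open TensorAlgebra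

section
variable {k}
omit [SMulCommClass k L L] [IsScalarTower k L L]

lemma word_nil : word k ([] : List L) = 1 := rfl

lemma word_cons (a : L) (l : List L) : word k (a :: l) = ι k a * word k l := by
  simp [word]

lemma word_append (u v : List L) : word k (u ++ v) = word k u * word k v := by
  simp [word]

variable (k L) in
lemma span_range_word : Submodule.span k (Set.range (word k (L := L))) = ⊤ := by
  let words : Submonoid (TensorAlgebra k L) :=
    { carrier := Set.range (word k)
      one_mem' := ⟨[], word_nil⟩
      mul_mem' := by
        rintro _ _ ⟨u, rfl⟩ ⟨v, rfl⟩
        exact ⟨u ++ v, word_append u v⟩ }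
  have hclosure : Submonoid.closure (Set.range (ι k)) ≤ words :=
    Submonoid.closure_le.mpr fun _ ⟨a, ha⟩ => ⟨[a], by simp [← ha, word]⟩
  refine eq_top_iff.mpr fun x _ => Submodule.span_mono hclosure ?_
  rw [← Algebra.adjoin_eq_span, adjoin_range_ι]
  trivial

lemma ext_word {M : Type*} [AddCommMonoid M] [Module k M] {f g : TensorAlgebra k L →ₗ[k] M}
    (h : ∀ u, f (word k u) = g (word k u)) : f = g :=
  LinearMap.ext_on_range (span_range_word k L) h

lemma ext_word₂ {M : Type*} [AddCommMonoid M] [Module k M]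
    {f g : TensorAlgebra k L →ₗ[k] TensorAlgebra k L →ₗ[k] M}
    (h : ∀ u v, f (word k u) (word k v) = g (word k u) (word k v)) : f = g :=
  ext_word fun u => ext_word (h u)

lemma psi_nil (c : ℕ → k) : psi k c ([] : List L) = 1 := by rw [psi]

lemma psi_cons (c : ℕ → k) (a : L) (w : List L) : psi k c (a :: w) =
    ∑ j ∈ Finset.range (w.length + 1),
      c (j + 1) • (ι k (blockProd (a :: w.take j)) * psi k c (w.drop j)) := by
  rw [psi]

lemma psi_singleton (c : ℕ → k) (a : L) : psi k c [a] = c 1 • ι k a := by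
  simp [psi_cons, blockProd, psi_nil]

lemma blockProd_cons_cons (a b : L) (t : List L) :
    blockProd (a :: b :: t) = blockProd ((a * b) :: t) := rfl

lemma blockProd_mul_cons (a b : L) (t : List L) :
    blockProd ((a * b) :: t) = a * blockProd (b :: t) := by
  induction t generalizing b with
  | nil => rfl
  | cons x t ih => simpa [blockProd, mul_assoc] using ih (b * x)

/-- The first block either is the single letter `a` or absorbs `b` into `a ⋄ b`. -/
lemma psi_geom_cons_cons (s : k) (a b : L) (w : List L) :
    psi k (fun n => s ^ (n - 1)) (a :: b :: w)
      = ι k a * psi k (fun n => s ^ (n - 1)) (b :: w)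
        + s • psi k (fun n => s ^ (n - 1)) ((a * b) :: w) := by
  rw [psi_cons, List.length_cons, Finset.sum_range_succ', add_comm]
  congr 1
  · simp [blockProd]
  · rw [psi_cons, Finset.smul_sum]
    refine Finset.sum_congr rfl fun j _ => ?_
    simp only [smul_smul, Nat.add_sub_cancel, List.take_succ_cons, List.drop_succ_cons,
      blockProd_cons_cons, pow_succ']

/-- `D a` is the paper's `a ⋄ ·`: it multiplies the first letter of a word by `a`. -/
structure IsFirstLetterMul (D : L → TensorAlgebra k L →ₗ[k] TensorAlgebra k L) : Prop where
  map_one : ∀ a, D a 1 = 0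
  map_ι_mul_word : ∀ a c u, D a (ι k c * word k u) = ι k (a * c) * word k u

namespace IsFirstLetterMul

variable {D : L → TensorAlgebra k L →ₗ[k] TensorAlgebra k L} (hD : IsFirstLetterMul D)
include hD

lemma map_ι_mul (a c : L) (z : TensorAlgebra k L) : D a (ι k c * z) = ι k (a * c) * z := by
  have : (D a).comp (LinearMap.mulLeft k (ι k c)) = LinearMap.mulLeft k (ι k (a * c)) :=
    ext_word fun u => hD.map_ι_mul_word a c u
  exact LinearMap.congr_fun this z

lemma map_ι (a c : L) : D a (ι k c) = ι k (a * c) := by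
  simpa using hD.map_ι_mul a c 1

lemma map_word_cons (a c : L) (u : List L) : D a (word k (c :: u)) = word k ((a * c) :: u) := by
  rw [word_cons, hD.map_ι_mul, word_cons]

lemma map_psi_cons (c : ℕ → k) (a e : L) (u : List L) :
    D a (psi k c (e :: u)) = psi k c ((a * e) :: u) := by
  simp only [psi_cons, map_sum, map_smul, hD.map_ι_mul, blockProd_mul_cons]

end IsFirstLetterMul

/-- `Σ^s = Ψ_f` for `f = t / (1 - s t) = ∑ sⁿ⁻¹ tⁿ`. -/
def IsSigma (s : k) (S : TensorAlgebra k L →ₗ[k] TensorAlgebra k L) : Prop :=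
  ∀ u, S (word k u) = psi k (fun n => s ^ (n - 1)) u

def twist (D : L → TensorAlgebra k L →ₗ[k] TensorAlgebra k L) (s : k) (a : L) :
    TensorAlgebra k L →ₗ[k] TensorAlgebra k L :=
  LinearMap.mulLeft k (ι k a) + s • D a

lemma twist_apply (D : L → TensorAlgebra k L →ₗ[k] TensorAlgebra k L) (s : k) (a : L)
    (z : TensorAlgebra k L) : twist D s a z = ι k a * z + s • D a z := rfl

namespace IsSigma

variable {s : k} {S : TensorAlgebra k L →ₗ[k] TensorAlgebra k L} (hS : IsSigma s S)
  {D : L → TensorAlgebra k L →ₗ[k] TensorAlgebra k L}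
include hS

lemma map_one : S 1 = 1 := by
  simpa [word_nil, psi_nil] using hS []

lemma map_ι (a : L) : S (ι k a) = ι k a := by
  simpa [word, psi_singleton] using hS [a]

lemma map_D (hD : IsFirstLetterMul D) (a : L) (z : TensorAlgebra k L) :
    S (D a z) = D a (S z) := by
  have : S.comp (D a) = (D a).comp S := by
    refine ext_word fun u => ?_
    cases u with
    | nil => simp [word_nil, hS.map_one, hD.map_one]
    | cons c u => simp [hD.map_word_cons, hS _, hD.map_psi_cons]
  exact LinearMap.congr_fun this z

lemma map_ι_mul (hD : IsFirstLetterMul D) (a : L) (z : TensorAlgebra k L) :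
    S (ι k a * z) = twist D s a (S z) := by
  have : S.comp (LinearMap.mulLeft k (ι k a)) = (twist D s a).comp S := by
    refine ext_word fun u => ?_
    cases u with
    | nil => simp [word_nil, twist_apply, hS.map_one, hS.map_ι, hD.map_one]
    | cons c u =>
      simp only [LinearMap.comp_apply, LinearMap.mulLeft_apply, twist_apply, ← word_cons, hS _,
        psi_geom_cons_cons, hD.map_psi_cons]
  exact LinearMap.congr_fun this z

lemma map_ι_mul_ι (hD : IsFirstLetterMul D) (a b : L) :
    S (ι k a * ι k b) = ι k a * ι k b + s • ι k (a * b) := by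
  rw [hS.map_ι_mul hD, twist_apply, hS.map_ι, hD.map_ι]

end IsSigma

lemma IsSigma.map_twist_neg {s : k} {S : TensorAlgebra k L →ₗ[k] TensorAlgebra k L}
    (hS : IsSigma (-s) S) {D : L → TensorAlgebra k L →ₗ[k] TensorAlgebra k L}
    (hD : IsFirstLetterMul D) (a : L) (z : TensorAlgebra k L) :
    S (twist D s a z) = ι k a * S z := by
  rw [twist_apply, map_add, hS.map_ι_mul hD, map_smul, hS.map_D hD, twist_apply, neg_smul,
    neg_add_cancel_right]

lemma IsSigma.map_map_eq_self {s : k} {S S' : TensorAlgebra k L →ₗ[k] TensorAlgebra k L}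
    (hS : IsSigma s S) (hS' : IsSigma (-s) S') {D : L → TensorAlgebra k L →ₗ[k] TensorAlgebra k L}
    (hD : IsFirstLetterMul D) (z : TensorAlgebra k L) : S' (S z) = z := by
  have : S'.comp S = LinearMap.id := by
    refine ext_word fun u => ?_
    induction u with
    | nil => simp [word_nil, hS.map_one, hS'.map_one]
    | cons a u ih =>
      simp only [LinearMap.comp_apply, LinearMap.id_apply] at ih ⊢
      rw [word_cons, hS.map_ι_mul hD, hS'.map_twist_neg hD, ih]
  exact LinearMap.congr_fun this z

structure IsQuasiShuffleProduct
    (m : TensorAlgebra k L →ₗ[k] TensorAlgebra k L →ₗ[k] TensorAlgebra k L) : Prop where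
  one_left : ∀ x, m 1 x = x
  one_right : ∀ x, m x 1 = x
  ι_mul_word_ι_mul_word : ∀ (a b : L) (v w : List L),
    m (ι k a * word k v) (ι k b * word k w)
      = ι k a * m (word k v) (ι k b * word k w) + ι k b * m (ι k a * word k v) (word k w)
        + ι k (a * b) * m (word k v) (word k w)

namespace IsQuasiShuffleProduct

variable {m : TensorAlgebra k L →ₗ[k] TensorAlgebra k L →ₗ[k] TensorAlgebra k L}
  (hm : IsQuasiShuffleProduct m) {D : L → TensorAlgebra k L →ₗ[k] TensorAlgebra k L}
include hm

lemma map_ι_mul_ι_mul (a b : L) (x y : TensorAlgebra k L) :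
    m (ι k a * x) (ι k b * y)
      = ι k a * m x (ι k b * y) + ι k b * m (ι k a * x) y + ι k (a * b) * m x y := by
  let la := LinearMap.mulLeft k (ι k a)
  let lb := LinearMap.mulLeft k (ι k b)
  have : m.compl₁₂ la lb = (m.compl₂ lb).compr₂ la + (m.comp la).compr₂ lb
      + m.compr₂ (LinearMap.mulLeft k (ι k (a * b))) :=
    ext_word₂ fun v w => hm.ι_mul_word_ι_mul_word a b v w
  exact LinearMap.congr_fun₂ this x y

lemma map_D_D (hD : IsFirstLetterMul D) (a b : L) (x y : TensorAlgebra k L) :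
    m (D a x) (D b y) + D (a * b) (m x y) = D a (m x (D b y)) + D b (m (D a x) y) := by
  have : m.compl₁₂ (D a) (D b) + m.compr₂ (D (a * b))
      = (m.compl₂ (D b)).compr₂ (D a) + (m.comp (D a)).compr₂ (D b) := by
    refine ext_word₂ fun v w => ?_
    simp only [LinearMap.add_apply, LinearMap.compl₁₂_apply, LinearMap.compr₂_apply,
      LinearMap.compl₂_apply, LinearMap.comp_apply]
    cases v <;> cases w <;>
      simp only [word_nil, word_cons, hD.map_one, hD.map_ι_mul, hm.one_left,
        hm.one_right, hm.map_ι_mul_ι_mul, map_add, map_zero, LinearMap.zero_apply, zero_add,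
        add_zero] <;>
      simp only [mul_comm, mul_left_comm]
    abel
  exact LinearMap.congr_fun₂ this x y

lemma map_ι_mul_D_add_map_D_ι_mul (hD : IsFirstLetterMul D) (a b : L) (x y : TensorAlgebra k L) :
    m (ι k a * x) (D b y) + m (D a x) (ι k b * y) + (2 : k) • (ι k (a * b) * m x y)
      = ι k a * m x (D b y) + D a (m x (ι k b * y)) + ι k b * m (D a x) y
        + D b (m (ι k a * x) y) := by
  let la := LinearMap.mulLeft k (ι k a)
  let lb := LinearMap.mulLeft k (ι k b)
  have : m.compl₁₂ la (D b) + m.compl₁₂ (D a) lb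
        + (2 : k) • m.compr₂ (LinearMap.mulLeft k (ι k (a * b)))
      = (m.compl₂ (D b)).compr₂ la + (m.compl₂ lb).compr₂ (D a) + (m.comp (D a)).compr₂ lb
        + (m.comp la).compr₂ (D b) := by
    refine ext_word₂ fun v w => ?_
    simp only [LinearMap.add_apply, LinearMap.smul_apply, LinearMap.compl₁₂_apply,
      LinearMap.compr₂_apply, LinearMap.compl₂_apply, LinearMap.comp_apply, la, lb,
      LinearMap.mulLeft_apply]
    cases v <;> cases w <;>
      simp only [word_nil, word_cons, two_smul, hD.map_one, hD.map_ι_mul, hm.one_left,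
        hm.one_right, hm.map_ι_mul_ι_mul, map_add, map_zero, mul_add, mul_zero, LinearMap.zero_apply,
        zero_add, add_zero] <;>
      simp only [mul_one, mul_comm, mul_left_comm] <;>
      abel
  exact LinearMap.congr_fun₂ this x y

lemma map_twist_twist (hD : IsFirstLetterMul D) (r : k) (a b : L) (x y : TensorAlgebra k L) :
    m (twist D r a x) (twist D r b y)
      = twist D r a (m x (twist D r b y)) + twist D r b (m (twist D r a x) y)
        + (1 - 2 * r) • twist D r (a * b) (m x y) + (r ^ 2 - r) • D (a * b) (m x y) := by
  simp only [twist_apply, map_add, map_smul, LinearMap.add_apply, LinearMap.smul_apply, smul_add]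
  linear_combination (norm := module) hm.map_ι_mul_ι_mul a b x y
    + r • hm.map_ι_mul_D_add_map_D_ι_mul hD a b x y + r ^ 2 • hm.map_D_D hD a b x y

end IsQuasiShuffleProduct

end

/--
The interpolated product `u ∗_r v = Σ^{−r}(Σ^r u * Σ^r v)` on a
quasi-shuffle algebra satisfies: `1 ∗_r w = w ∗_r 1 = w`;
`a ∗_r b = ab + ba + (1−2r)(a⋄b)` for letters `a, b`; and
`(av) ∗_r (bw) = a(v ∗_r bw) + b(av ∗_r w) + (1−2r)(a⋄b)(v ∗_r w)
  + (r²−r)(a⋄b)⋄(v ∗_r w)` for words `v, w` with `vw ≠ 1`.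
-/
theorem stmt8 (r : k)
    (m : TensorAlgebra k L →ₗ[k] TensorAlgebra k L →ₗ[k] TensorAlgebra k L)
    (hmul : ∀ x, m 1 x = x) (hmur : ∀ x, m x 1 = x)
    (hmrec : ∀ (a b : L) (v w : List L),
      m (TensorAlgebra.ι k a * word k v) (TensorAlgebra.ι k b * word k w)
        = TensorAlgebra.ι k a * m (word k v) (TensorAlgebra.ι k b * word k w)
          + TensorAlgebra.ι k b * m (TensorAlgebra.ι k a * word k v) (word k w)
          + TensorAlgebra.ι k (a * b) * m (word k v) (word k w))
    (Sr Snr : TensorAlgebra k L →ₗ[k] TensorAlgebra k L)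
    (hSr : ∀ w : List L, Sr (word k w) = psi k (fun n => r ^ (n - 1)) w)
    (hSnr : ∀ w : List L, Snr (word k w) = psi k (fun n => (-r) ^ (n - 1)) w)
    (D : L → TensorAlgebra k L →ₗ[k] TensorAlgebra k L)
    (hD1 : ∀ a : L, D a 1 = 0)
    (hDw : ∀ (a c : L) (u : List L),
      D a (TensorAlgebra.ι k c * word k u) = TensorAlgebra.ι k (a * c) * word k u)
    (mr : TensorAlgebra k L → TensorAlgebra k L → TensorAlgebra k L)
    (hmr : ∀ x y, mr x y = Snr (m (Sr x) (Sr y))) :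
    (∀ x, mr 1 x = x) ∧ (∀ x, mr x 1 = x) ∧
    (∀ a b : L,
      mr (TensorAlgebra.ι k a) (TensorAlgebra.ι k b)
        = TensorAlgebra.ι k a * TensorAlgebra.ι k b
          + TensorAlgebra.ι k b * TensorAlgebra.ι k a
          + (1 - 2 * r) • TensorAlgebra.ι k (a * b)) ∧
    (∀ (a b : L) (v w : List L), v ++ w ≠ [] →
      mr (word k (a :: v)) (word k (b :: w))
        = TensorAlgebra.ι k a * mr (word k v) (word k (b :: w))
          + TensorAlgebra.ι k b * mr (word k (a :: v)) (word k w)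
          + (1 - 2 * r) • (TensorAlgebra.ι k (a * b) * mr (word k v) (word k w))
          + (r ^ 2 - r) • D (a * b) (mr (word k v) (word k w))) := by
  have hm : IsQuasiShuffleProduct m := ⟨hmul, hmur, hmrec⟩
  have hD : IsFirstLetterMul D := ⟨hD1, hDw⟩
  have hSr : IsSigma r Sr := hSr
  have hSnr : IsSigma (-r) Snr := hSnr
  refine ⟨fun x => ?_, fun x => ?_, fun a b => ?_, fun a b v w _ => ?_⟩
  · rw [hmr, hSr.map_one, hmul, hSr.map_map_eq_self hSnr hD]
  · rw [hmr, hSr.map_one, hmur, hSr.map_map_eq_self hSnr hD]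
  · have hab : m (ι k a) (ι k b) = ι k a * ι k b + ι k b * ι k a + ι k (a * b) := by
      simpa [hm.one_left, hm.one_right] using hm.map_ι_mul_ι_mul a b 1 1
    rw [hmr, hSr.map_ι, hSr.map_ι, hab, map_add, map_add, hSnr.map_ι_mul_ι hD,
      hSnr.map_ι_mul_ι hD, hSnr.map_ι, mul_comm b a]
    module
  · simp only [hmr, word_cons, hSr.map_ι_mul hD, hm.map_twist_twist hD, map_add, map_smul,
      hSnr.map_twist_neg hD, hSnr.map_D hD]
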